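/- Fairness decomposition under upper-bound reporting: suppose on round t the allocations are set via MMF and agent i's reported demand is d_{it} = ud_{it} * v_{it}. If udub_{it} >= max(wtrue_i, ud_{it}), then u_i(e_i / v_{it}) - u_i(a_{it}/v_{it}) <= L_i * (udub_{it} - ud_{it}), where L_i is the Lipschitz constant of u_i. -/

import Mathlib

/-!
Under max-min fairness an agent receives either at least her entitlement, in which case
monotonicity makes the loss nonpositive, or exactly her demand, so `a i / v = ud`; then the
loss is at most the Lipschitz bound on the climb from `ud` to the maximiser, which lies
below `udub`.
-/

open Finset

/-- Max-min fairness allocation, characterized as weighted water-filling. -/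
def IsMMF {n : ℕ} (e d a : Fin n → ℝ) : Prop :=
  ∃ lam : ℝ, 0 ≤ lam ∧ (∀ i, a i = min (d i) (lam * e i)) ∧
    (∑ i, a i = min 1 (∑ i, d i))

namespace IsMMF

variable {n : ℕ} {e d a : Fin n → ℝ}

theorem le_demand (h : IsMMF e d a) (i : Fin n) : a i ≤ d i := by
  obtain ⟨lam, -, hai, -⟩ := h
  exact (hai i).trans_le (min_le_left _ _)

/-- If the water level is below `1`, the total allocation is below `1`, so every
demand is served in full. -/
theorem min_demand_entitlement_le (h : IsMMF e d a) (he : ∀ j, 0 ≤ e j)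
    (hesum : ∑ j, e j ≤ 1) (i : Fin n) : min (d i) (e i) ≤ a i := by
  have hle := h.le_demand
  obtain ⟨lam, hlam, hai, hsum⟩ := h
  rcases le_or_gt 1 lam with hlam1 | hlam1
  · rw [hai i]
    exact min_le_min_left _ (le_mul_of_one_le_left (he i) hlam1)
  have hsum_lt : ∑ j, a j < 1 :=
    calc ∑ j, a j ≤ ∑ j, lam * e j :=
          sum_le_sum fun j _ => (hai j).trans_le (min_le_right _ _)
      _ = lam * ∑ j, e j := (mul_sum _ _ _).symm
      _ ≤ lam := mul_le_of_le_one_right hlam hesum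
      _ < 1 := hlam1
  have hsum_eq : ∑ j, a j = ∑ j, d j := by
    rw [hsum] at hsum_lt ⊢
    exact min_eq_right (not_le.1 fun h1 => hsum_lt.ne (min_eq_left h1)).le
  have hai_eq : a i = d i :=
    (sum_eq_sum_iff_of_le fun j _ => hle j).1 hsum_eq i (mem_univ i)
  exact hai_eq ▸ min_le_left _ _

theorem entitlement_le_or_eq_demand (h : IsMMF e d a) (he : ∀ j, 0 ≤ e j)
    (hesum : ∑ j, e j ≤ 1) (i : Fin n) : e i ≤ a i ∨ a i = d i := by
  have hle := h.min_demand_entitlement_le he hesum i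
  rcases min_choice (d i) (e i) with hmin | hmin
  · exact Or.inr (le_antisymm (h.le_demand i) (hmin ▸ hle))
  · exact Or.inl (hmin ▸ hle)

end IsMMF

section Utility

variable {u : ℝ → ℝ} {L : ℝ}

theorem nonneg_of_abs_sub_le_mul_abs_sub (hLip : ∀ x y, |u x - u y| ≤ L * |x - y|) :
    0 ≤ L := by
  simpa using (abs_nonneg _).trans (hLip 1 0)

/-- Comparing with the maximiser moved up to `max w y ≤ b`, the loss of utility at `y`
is at most `L` times the distance from `y` to `b`. -/
theorem sub_le_mul_sub_of_maximizer_le {w b : ℝ} (hLip : ∀ x y, |u x - u y| ≤ L * |x - y|)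
    (hmono : Monotone u) (hmax : ∀ x, u x ≤ u w) (hw : w ≤ b) {y : ℝ} (hy : y ≤ b)
    (x : ℝ) : u x - u y ≤ L * (b - y) :=
  calc u x - u y ≤ u (max w y) - u y := sub_le_sub_right ((hmax x).trans (hmono le_sup_left)) _
    _ ≤ |u (max w y) - u y| := le_abs_self _
    _ ≤ L * |max w y - y| := hLip _ _
    _ = L * (max w y - y) := by rw [abs_of_nonneg (sub_nonneg.2 le_sup_right)]
    _ ≤ L * (b - y) := mul_le_mul_of_nonneg_left (by gcongr; exact max_le hw hy)
                        (nonneg_of_abs_sub_le_mul_abs_sub hLip)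

end Utility

theorem mmf_fairness_decomposition_general {n : ℕ} (e d a : Fin n → ℝ)
    (he : ∀ j, 0 < e j) (hesum : ∑ j, e j = 1)
    (i : Fin n) (v ud udub w L : ℝ)
    (hv : 0 < v) (hrep : d i = ud * v)
    (hudubw : w ≤ udub) (hudubd : ud ≤ udub)
    (u : ℝ → ℝ)
    (hLip : ∀ x y, |u x - u y| ≤ L * |x - y|)
    (hmono : Monotone u) (hmax : ∀ x, u x ≤ u w)
    (hmmf : IsMMF e d a) :
    u (e i / v) - u (a i / v) ≤ L * (udub - ud) := by
  rcases hmmf.entitlement_le_or_eq_demand (fun j => (he j).le) hesum.le i with hea | had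
  · calc u (e i / v) - u (a i / v) ≤ 0 :=
          sub_nonpos.2 (hmono (div_le_div_of_nonneg_right hea hv.le))
      _ ≤ L * (udub - ud) :=
          mul_nonneg (nonneg_of_abs_sub_le_mul_abs_sub hLip) (sub_nonneg.2 hudubd)
  · rw [had, hrep, mul_div_cancel_right₀ _ hv.ne']
    exact sub_le_mul_sub_of_maximizer_le hLip hmono hmax hudubw hudubd _

/-- Fairness decomposition under upper-bound reporting: if on some round the
allocations are set via max-min fairness, agent `i`'s reported demand is
`d i = ud * v` where `v > 0` is her load, her `L`-Lipschitz nondecreasing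
utility `u` is maximised at her true unit demand `w`, and
`udub ≥ max w ud`, then
`u (e i / v) - u (a i / v) ≤ L * (udub - ud)`. -/
theorem mmf_fairness_decomposition {n : ℕ} (e d a : Fin n → ℝ)
    (he : ∀ j, 0 < e j) (hesum : ∑ j, e j = 1) (hd : ∀ j, 0 ≤ d j)
    (i : Fin n) (v ud udub w L : ℝ)
    (hv : 0 < v) (hrep : d i = ud * v)
    (hudubw : w ≤ udub) (hudubd : ud ≤ udub)
    (u : ℝ → ℝ) (hL : 0 ≤ L)
    (hLip : ∀ x y, |u x - u y| ≤ L * |x - y|)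
    (hmono : Monotone u) (hmax : ∀ x, u x ≤ u w)
    (hmmf : IsMMF e d a) :
    u (e i / v) - u (a i / v) ≤ L * (udub - ud) :=
  mmf_fairness_decomposition_general e d a he hesum i v ud udub w L hv hrep hudubw hudubd u hLip
    hmono hmax hmmf
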